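/- arXiv:1804.02091 — 4 statements merged into one kernel-verified Lean document; each statement's English description precedes it below -/
import Mathlib

section
/- The restriction of the extended CMV matrix to the window [1,n-1] is invariant under flipping the signs of all Verblunsky coefficients at the level of characteristic polynomials: det(z·I - E_{[1,n-1]}) = det(z·I - E'_{[1,n-1]}), where E is the extended CMV matrix built from {α_k} and E' is built from {-α_k}. -/
open Polynomial Matrix Complex
open scoped ComplexConjugate

noncomputable section

/-- `ρ_n = sqrt(1 - |α_n|²)`. -/
def rhoC (α : ℤ → ℂ) (n : ℤ) : ℝ := Real.sqrt (1 - ‖α n‖ ^ 2)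

/-- Entry `(i,k)` of the extended CMV matrix with Verblunsky coefficients `α`. -/
def cmvEntry (α : ℤ → ℂ) (i k : ℤ) : ℂ :=
  if i % 2 = 0 then
    if k = i - 1 then conj (α i) * rhoC α (i - 1)
    else if k = i then -conj (α i) * α (i - 1)
    else if k = i + 1 then conj (α (i + 1)) * rhoC α i
    else if k = i + 2 then (rhoC α (i + 1) : ℂ) * rhoC α i
    else 0
  else
    if k = i - 2 then (rhoC α (i - 1) : ℂ) * rhoC α (i - 2)
    else if k = i - 1 then -(rhoC α (i - 1) : ℂ) * α (i - 2)
    else if k = i then -conj (α i) * α (i - 1)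
    else if k = i + 1 then -α (i - 1) * rhoC α i
    else 0

/-- The restriction of the extended CMV matrix to the window `[a, a+m-1]`. -/
def cmvWindow (α : ℤ → ℂ) (a : ℤ) (m : ℕ) : Matrix (Fin m) (Fin m) ℂ :=
  Matrix.of fun i j => cmvEntry α (a + (i : ℕ)) (a + (j : ℕ))

/-- Extension of half-line Verblunsky coefficients, using the convention `α_{-1} = -1`,
under which the half-line CMV matrix is the restriction of the extended one to `[0,∞)`. -/
def halfAlpha (α : ℕ → ℂ) : ℤ → ℂ := fun n => if n < 0 then -1 else α n.toNat

/-- `det(z - X_{[a,a+m-1]})` as a polynomial in `z`, for `X` the extended CMV matrix of `α`. -/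
def windowPoly (α : ℤ → ℂ) (a : ℤ) (m : ℕ) : Polynomial ℂ :=
  ((Polynomial.X : Polynomial ℂ) • (1 : Matrix (Fin m) (Fin m) (Polynomial ℂ)) -
    (cmvWindow α a m).map Polynomial.C).det

/-- `det(z - X_{[a,a+m-1]})` evaluated at a point `z`. -/
def windowDet (α : ℤ → ℂ) (z : ℂ) (a : ℤ) (m : ℕ) : ℂ := (windowPoly α a m).eval z

/-- Reversed polynomial at degree `n`: coefficients are conjugated and reversed
within indices `0, …, n`, so `(revPoly n Q)(z) = zⁿ conj(Q(1/conj z))`. -/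
def revPoly (n : ℕ) (Q : Polynomial ℂ) : Polynomial ℂ :=
  ∑ k ∈ Finset.range (n + 1), Polynomial.C (conj (Q.coeff (n - k))) * Polynomial.X ^ k

/-- The monic orthogonal polynomials `Φ_n` defined by the Szegő recursion
`Φ_{k+1}(z) = z Φ_k(z) - conj(α_k) Φ_k*(z)`, `Φ_0 = 1`. -/
def monicOPUC (α : ℕ → ℂ) : ℕ → Polynomial ℂ
  | 0 => 1
  | n + 1 => Polynomial.X * monicOPUC α n -
      Polynomial.C (conj (α n)) * revPoly n (monicOPUC α n)

/-- The Szegő cocycle matrix `S^z_α = (1/ρ)[[z, -conj α],[-αz, 1]]`. -/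
def szego (z α : ℂ) : Matrix (Fin 2) (Fin 2) ℂ :=
  ((Real.sqrt (1 - ‖α‖ ^ 2) : ℂ))⁻¹ • !![z, -conj α; -α * z, 1]

/-- The `n`-step Szegő transfer matrix `S^z_n = S^z_{α_{n-1}} ⋯ S^z_{α_0}`. -/
def szegoTransfer (α : ℕ → ℂ) (z : ℂ) : ℕ → Matrix (Fin 2) (Fin 2) ℂ
  | 0 => 1
  | n + 1 => szego z (α n) * szegoTransfer α z n

/-- The matrix `P_m` appearing in the cofactor expansion of `det(z - E_{[0,m]})`
along the first column: the minor of `z - E_{[0,m]}` deleting row `1` and column `0`. -/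
def Pmat (α : ℤ → ℂ) (z : ℂ) (m : ℕ) : Matrix (Fin m) (Fin m) ℂ :=
  (z • (1 : Matrix (Fin (m + 1)) (Fin (m + 1)) ℂ) - cmvWindow α 0 (m + 1)).submatrix
    (Fin.succAbove 1) (Fin.succAbove 0)

/-
Flipping `α ↦ -α` leaves every `ρ_k` unchanged and multiplies each entry of the extended CMV
matrix by `(-1)^(i+k)`: on the five nonzero diagonals every entry is a product in which the
number of `α`'s has the parity of the offset `k - i`. Hence the flipped window is the original
window conjugated by the involution `diag((-1)^i)`, and the two have the same characteristic
polynomial.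
-/

theorem Matrix.charpoly_diagonal_mul_mul_diagonal {R n : Type*} [CommRing R] [Fintype n]
    [DecidableEq n] {u : n → R} (hu : ∀ i, u i * u i = 1) (M : Matrix n n R) :
    (diagonal u * M * diagonal u).charpoly = M.charpoly := by
  have hD : diagonal u * diagonal u = 1 := by
    rw [diagonal_mul_diagonal, ← diagonal_one]
    exact congrArg diagonal (funext hu)
  rw [charpoly_mul_comm, ← mul_assoc, hD, one_mul]

theorem windowPoly_eq_charpoly (α : ℤ → ℂ) (a : ℤ) (m : ℕ) :
    windowPoly α a m = (cmvWindow α a m).charpoly := by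
  rw [windowPoly, charpoly, charmatrix, smul_one_eq_diagonal]
  rfl

theorem rhoC_neg (α : ℤ → ℂ) : rhoC (fun n => -α n) = rhoC α := by
  funext n
  simp [rhoC]

theorem cmvEntry_neg (α : ℤ → ℂ) (i k : ℤ) :
    cmvEntry (fun n => -α n) i k = (-1 : ℂ) ^ (i + k) * cmvEntry α i k := by
  obtain ⟨d, rfl⟩ : ∃ d, k = i + d := ⟨k - i, by ring⟩
  have sign : (-1 : ℂ) ^ (i + (i + d)) = (-1) ^ d := by
    rw [← add_assoc, ← two_mul, zpow_add₀ (by norm_num), (even_two_mul i).neg_one_zpow, one_mul]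
  rw [sign]
  -- rewrites each branch condition `i + d = i - c` to `d = -c`
  simp only [cmvEntry, rhoC_neg, map_neg, sub_eq_add_neg, add_right_inj, add_eq_left]
  split_ifs <;> subst_vars <;> norm_num

theorem cmvWindow_neg (α : ℤ → ℂ) (a : ℤ) (m : ℕ) :
    cmvWindow (fun n => -α n) a m =
      diagonal (fun i : Fin m => (-1 : ℂ) ^ (a + (i : ℕ))) * cmvWindow α a m *
        diagonal (fun i : Fin m => (-1 : ℂ) ^ (a + (i : ℕ))) := by
  ext i j
  simp only [mul_diagonal, diagonal_mul, cmvWindow, of_apply]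
  rw [cmvEntry_neg, zpow_add₀ (by norm_num)]
  ring

theorem windowPoly_neg (α : ℤ → ℂ) (a : ℤ) (m : ℕ) :
    windowPoly (fun k => -α k) a m = windowPoly α a m := by
  rw [windowPoly_eq_charpoly, windowPoly_eq_charpoly, cmvWindow_neg,
    charpoly_diagonal_mul_mul_diagonal]
  intro i
  rw [← zpow_add₀ (by norm_num), ← two_mul]
  exact (even_two_mul _).neg_one_zpow

theorem windowDet_sign_flip_invariant_general (α : ℤ → ℂ)
    (m : ℕ) (z : ℂ) :
    windowDet α z 1 m = windowDet (fun k => -α k) z 1 m := by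
  rw [windowDet, windowDet, windowPoly_neg]

theorem windowDet_sign_flip_invariant (α : ℤ → ℂ) (hα : ∀ k, ‖α k‖ < 1)
    (m : ℕ) (z : ℂ) :
    windowDet α z 1 m = windowDet (fun k => -α k) z 1 m :=
  windowDet_sign_flip_invariant_general α m z
end
end

section
/- For the extended CMV matrix E with Verblunsky coefficients {α_k}_{k∈ℤ} and 1 ≤ k < n-1, the characteristic determinant satisfies the expansion det(z - E_{[k,n-1]}) = (z + conj(α_k) α_{k-1}) det(z - E_{[k+1,n-1]}) + conj(α_{k+1}) α_{k-1} ρ_k² det(z - E_{[k+2,n-1]}) + ... + conj(α_{n-1}) α_{k-1} ∏_{j=k}^{n-2} ρ_j². -/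
open Polynomial Matrix Complex
open scoped ComplexConjugate

noncomputable section

/-! Write `D(a, m) = det(z - E_{[a, a+m-1]})`. Column `a` of `E` (for `a` even), resp. row `a`
(for `a` odd), meets the window only in the diagonal entry and in position `a + 1`, so expanding
along it gives `D(a, m+2) = (z + ᾱ_a α_{a-1}) D(a+1, m+1) - α_{a-1} ρ_a det Q_a`, with `Q_a`
the complementary minor (`cmvMinor`). In turn the first row (resp. column) of `Q_a` has only two
nonzero entries, and expanding along it gives
`det Q_a = -ᾱ_{a+1} ρ_a D(a+2, m) + ρ_{a+1} ρ_a det Q_{a+1}`, the parity having flipped.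
Unrolling this recursion (`cmvTail`) produces the sum. -/

namespace Matrix

variable {R : Type*} [CommRing R] {s : ℕ}

theorem det_succ_succ_column_zero_of_tail_eq_zero (M : Matrix (Fin (s + 2)) (Fin (s + 2)) R)
    (h : ∀ i : Fin s, M i.succ.succ 0 = 0) :
    M.det = M 0 0 * (M.submatrix Fin.succ Fin.succ).det
      - M 1 0 * (M.submatrix (Fin.succAbove 1) Fin.succ).det := by
  rw [det_succ_column_zero, Fin.sum_univ_succ, Fin.sum_univ_succ,
    Finset.sum_eq_zero fun i _ => by rw [h i, mul_zero, zero_mul]]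
  simp [sub_eq_add_neg]

theorem det_succ_succ_row_zero_of_tail_eq_zero (M : Matrix (Fin (s + 2)) (Fin (s + 2)) R)
    (h : ∀ j : Fin s, M 0 j.succ.succ = 0) :
    M.det = M 0 0 * (M.submatrix Fin.succ Fin.succ).det
      - M 0 1 * (M.submatrix Fin.succ (Fin.succAbove 1)).det := by
  rw [← det_transpose, det_succ_succ_column_zero_of_tail_eq_zero Mᵀ h]
  simp only [transpose_apply, ← transpose_submatrix, det_transpose]

end Matrix

section CMVEntry

variable (α : ℤ → ℂ) (a i j : ℤ)

theorem cmvEntry_self : cmvEntry α i i = -conj (α i) * α (i - 1) := by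
  unfold cmvEntry; split_ifs <;> first | omega | rfl

theorem cmvEntry_self_add_one_of_even (ha : a % 2 = 0) :
    cmvEntry α a (a + 1) = conj (α (a + 1)) * rhoC α a := by
  unfold cmvEntry; split_ifs <;> first | omega | rfl

theorem cmvEntry_self_add_one_of_odd (ha : a % 2 = 1) :
    cmvEntry α a (a + 1) = -α (a - 1) * rhoC α a := by
  unfold cmvEntry; split_ifs <;> first | omega | rfl

theorem cmvEntry_self_add_two_of_even (ha : a % 2 = 0) :
    cmvEntry α a (a + 2) = rhoC α (a + 1) * rhoC α a := by
  unfold cmvEntry; split_ifs <;> first | omega | rfl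

theorem cmvEntry_add_one_self_of_even (ha : a % 2 = 0) :
    cmvEntry α (a + 1) a = -rhoC α a * α (a - 1) := by
  unfold cmvEntry; split_ifs <;> first | omega | ring_nf

theorem cmvEntry_add_one_self_of_odd (ha : a % 2 = 1) :
    cmvEntry α (a + 1) a = conj (α (a + 1)) * rhoC α a := by
  unfold cmvEntry; split_ifs <;> first | omega | ring_nf

theorem cmvEntry_add_two_self_of_odd (ha : a % 2 = 1) :
    cmvEntry α (a + 2) a = rhoC α (a + 1) * rhoC α a := by
  unfold cmvEntry; split_ifs <;> first | omega | ring_nf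

theorem cmvEntry_eq_zero_above_of_add_three_le (h : i + 3 ≤ j) : cmvEntry α i j = 0 := by
  unfold cmvEntry; split_ifs <;> first | omega | rfl

theorem cmvEntry_eq_zero_above_of_odd (hi : i % 2 = 1) (h : i + 2 ≤ j) :
    cmvEntry α i j = 0 := by
  unfold cmvEntry; split_ifs <;> first | omega | rfl

theorem cmvEntry_eq_zero_below_of_add_three_le (h : j + 3 ≤ i) : cmvEntry α i j = 0 := by
  unfold cmvEntry; split_ifs <;> first | omega | rfl

theorem cmvEntry_eq_zero_below_of_even (hj : j % 2 = 0) (h : j + 2 ≤ i) :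
    cmvEntry α i j = 0 := by
  unfold cmvEntry; split_ifs <;> first | omega | rfl

end CMVEntry

section CharWindow

variable (α : ℤ → ℂ) (z : ℂ) (a : ℤ)

def cmvCharWindow (m : ℕ) : Matrix (Fin m) (Fin m) ℂ := z • 1 - cmvWindow α a m

theorem det_cmvCharWindow (m : ℕ) : (cmvCharWindow α z a m).det = windowDet α z a m := by
  rw [windowDet, windowPoly, ← coe_evalRingHom, RingHom.map_det]
  congr 1
  ext i j
  by_cases h : i = j <;> simp [cmvCharWindow, one_apply, h]

theorem cmvCharWindow_apply_self {m : ℕ} (i : Fin m) :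
    cmvCharWindow α z a m i i = z + conj (α (a + i)) * α (a + i - 1) := by
  simp [cmvCharWindow, cmvWindow, cmvEntry_self]

theorem cmvCharWindow_apply_of_ne {m : ℕ} {i j : Fin m} (h : i ≠ j) :
    cmvCharWindow α z a m i j = -cmvEntry α (a + i) (a + j) := by
  simp [cmvCharWindow, cmvWindow, one_apply_ne h]

theorem cmvCharWindow_submatrix_succ_succ (m : ℕ) :
    (cmvCharWindow α z a (m + 1)).submatrix Fin.succ Fin.succ = cmvCharWindow α z (a + 1) m := by
  have hshift (k : Fin m) : a + ((k.succ : ℕ) : ℤ) = a + 1 + (k : ℕ) := by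
    rw [Fin.val_succ]; push_cast; ring
  ext i j
  simp only [cmvCharWindow, cmvWindow, submatrix_apply, Matrix.sub_apply, Matrix.smul_apply,
    of_apply, hshift, one_apply, Fin.succ_inj]

end CharWindow

section Minors

variable (α : ℤ → ℂ) (z : ℂ) (a : ℤ) (s : ℕ)

def cmvMinor₁₀ (m : ℕ) : Matrix (Fin m) (Fin m) ℂ :=
  (cmvCharWindow α z a (m + 1)).submatrix (Fin.succAbove 1) Fin.succ

def cmvMinor₀₁ (m : ℕ) : Matrix (Fin m) (Fin m) ℂ :=
  (cmvCharWindow α z a (m + 1)).submatrix Fin.succ (Fin.succAbove 1)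

theorem Fin.succAbove_one_comp_succ {n : ℕ} :
    (Fin.succAbove 1 : Fin (n + 1) → Fin (n + 2)) ∘ Fin.succ = Fin.succ ∘ Fin.succ :=
  funext Fin.one_succAbove_succ

theorem cmvMinor₁₀_submatrix_succ_succ :
    (cmvMinor₁₀ α z a (s + 2)).submatrix Fin.succ Fin.succ =
      cmvCharWindow α z (a + 2) (s + 1) := by
  simp only [cmvMinor₁₀, submatrix_submatrix, Fin.succAbove_one_comp_succ]
  rw [← submatrix_submatrix _ Fin.succ Fin.succ, cmvCharWindow_submatrix_succ_succ,
    cmvCharWindow_submatrix_succ_succ, add_assoc, one_add_one_eq_two]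

theorem cmvMinor₀₁_submatrix_succ_succ :
    (cmvMinor₀₁ α z a (s + 2)).submatrix Fin.succ Fin.succ =
      cmvCharWindow α z (a + 2) (s + 1) := by
  simp only [cmvMinor₀₁, submatrix_submatrix, Fin.succAbove_one_comp_succ]
  rw [← submatrix_submatrix _ Fin.succ Fin.succ, cmvCharWindow_submatrix_succ_succ,
    cmvCharWindow_submatrix_succ_succ, add_assoc, one_add_one_eq_two]

theorem cmvMinor₁₀_submatrix_succ_succAbove_one :
    (cmvMinor₁₀ α z a (s + 2)).submatrix Fin.succ (Fin.succAbove 1) =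
      cmvMinor₀₁ α z (a + 1) (s + 1) := by
  simp only [cmvMinor₁₀, cmvMinor₀₁, submatrix_submatrix, Fin.succAbove_one_comp_succ]
  rw [← submatrix_submatrix _ Fin.succ Fin.succ, cmvCharWindow_submatrix_succ_succ]

theorem cmvMinor₀₁_submatrix_succAbove_one_succ :
    (cmvMinor₀₁ α z a (s + 2)).submatrix (Fin.succAbove 1) Fin.succ =
      cmvMinor₁₀ α z (a + 1) (s + 1) := by
  simp only [cmvMinor₁₀, cmvMinor₀₁, submatrix_submatrix, Fin.succAbove_one_comp_succ]
  rw [← submatrix_submatrix _ Fin.succ Fin.succ, cmvCharWindow_submatrix_succ_succ]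

end Minors

section Expansion

variable (α : ℤ → ℂ) (z : ℂ) (a : ℤ) (s : ℕ)

def cmvMinor (m : ℕ) : Matrix (Fin m) (Fin m) ℂ :=
  if a % 2 = 0 then cmvMinor₁₀ α z a m else cmvMinor₀₁ α z a m

theorem cmvMinor_of_even (ha : a % 2 = 0) (m : ℕ) : cmvMinor α z a m = cmvMinor₁₀ α z a m :=
  if_pos ha

theorem cmvMinor_of_odd (ha : a % 2 = 1) (m : ℕ) : cmvMinor α z a m = cmvMinor₀₁ α z a m :=
  if_neg (by omega)

theorem windowDet_succ_succ_eq_sub_cmvMinor :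
    windowDet α z a (s + 2) = (z + conj (α a) * α (a - 1)) * windowDet α z (a + 1) (s + 1)
      - α (a - 1) * rhoC α a * (cmvMinor α z a (s + 1)).det := by
  have h00 : cmvCharWindow α z a (s + 2) 0 0 = z + conj (α a) * α (a - 1) := by
    simp [cmvCharWindow_apply_self]
  rw [← det_cmvCharWindow, ← det_cmvCharWindow, ← cmvCharWindow_submatrix_succ_succ]
  rcases Int.emod_two_eq a with ha | ha
  · have h10 : cmvCharWindow α z a (s + 2) 1 0 = α (a - 1) * rhoC α a := by
      rw [cmvCharWindow_apply_of_ne _ _ _ Fin.zero_lt_one.ne']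
      simp [cmvEntry_add_one_self_of_even α a ha, mul_comm]
    rw [det_succ_succ_column_zero_of_tail_eq_zero, h00, h10, cmvMinor_of_even α z a ha,
      cmvMinor₁₀]
    intro i
    rw [cmvCharWindow_apply_of_ne _ _ _ (Fin.succ_ne_zero _), neg_eq_zero]
    simp only [Fin.val_succ, Fin.val_zero, Nat.cast_zero, add_zero]
    exact cmvEntry_eq_zero_below_of_even α _ _ ha (by push_cast; omega)
  · have h01 : cmvCharWindow α z a (s + 2) 0 1 = α (a - 1) * rhoC α a := by
      rw [cmvCharWindow_apply_of_ne _ _ _ Fin.zero_lt_one.ne]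
      simp [cmvEntry_self_add_one_of_odd α a ha]
    rw [det_succ_succ_row_zero_of_tail_eq_zero, h00, h01, cmvMinor_of_odd α z a ha,
      cmvMinor₀₁]
    intro j
    rw [cmvCharWindow_apply_of_ne _ _ _ (Fin.succ_ne_zero _).symm, neg_eq_zero]
    simp only [Fin.val_succ, Fin.val_zero, Nat.cast_zero, add_zero]
    exact cmvEntry_eq_zero_above_of_odd α _ _ ha (by push_cast; omega)

theorem det_cmvMinor_one :
    (cmvMinor α z a 1).det = -(conj (α (a + 1)) * rhoC α a) := by
  rw [det_fin_one]
  rcases Int.emod_two_eq a with ha | ha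
  · rw [cmvMinor_of_even α z a ha, cmvMinor₁₀, submatrix_apply,
      cmvCharWindow_apply_of_ne _ _ _ (by decide)]
    simp [cmvEntry_self_add_one_of_even α a ha]
  · rw [cmvMinor_of_odd α z a ha, cmvMinor₀₁, submatrix_apply,
      cmvCharWindow_apply_of_ne _ _ _ (by decide)]
    simp [cmvEntry_add_one_self_of_odd α a ha]

theorem det_cmvMinor_succ_succ :
    (cmvMinor α z a (s + 2)).det =
      -(conj (α (a + 1)) * rhoC α a) * windowDet α z (a + 2) (s + 1)
      + rhoC α (a + 1) * rhoC α a * (cmvMinor α z (a + 1) (s + 1)).det := by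
  rw [← det_cmvCharWindow]
  rcases Int.emod_two_eq a with ha | ha
  · rw [cmvMinor_of_even α z a ha, cmvMinor_of_odd α z (a + 1) (by omega),
      det_succ_succ_row_zero_of_tail_eq_zero, cmvMinor₁₀_submatrix_succ_succ,
      cmvMinor₁₀_submatrix_succ_succAbove_one]
    · simp only [cmvMinor₁₀, submatrix_apply, Fin.one_succAbove_zero]
      rw [cmvCharWindow_apply_of_ne _ _ _ (Fin.succ_ne_zero _).symm,
        cmvCharWindow_apply_of_ne _ _ _ (Fin.succ_ne_zero _).symm]
      simp only [Fin.val_succ, Fin.val_zero, Fin.val_one, Nat.cast_one, Nat.cast_zero,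
        Nat.cast_ofNat, add_zero, zero_add, one_add_one_eq_two]
      rw [cmvEntry_self_add_one_of_even α a ha, cmvEntry_self_add_two_of_even α a ha]
      ring
    · intro j
      simp only [cmvMinor₁₀, submatrix_apply, Fin.one_succAbove_zero]
      rw [cmvCharWindow_apply_of_ne _ _ _ (Fin.succ_ne_zero _).symm, neg_eq_zero]
      simp only [Fin.val_succ, Fin.val_zero, Nat.cast_zero, add_zero]
      exact cmvEntry_eq_zero_above_of_add_three_le α _ _ (by push_cast; omega)
  · rw [cmvMinor_of_odd α z a ha, cmvMinor_of_even α z (a + 1) (by omega),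
      det_succ_succ_column_zero_of_tail_eq_zero, cmvMinor₀₁_submatrix_succ_succ,
      cmvMinor₀₁_submatrix_succAbove_one_succ]
    · simp only [cmvMinor₀₁, submatrix_apply, Fin.one_succAbove_zero]
      rw [cmvCharWindow_apply_of_ne _ _ _ (Fin.succ_ne_zero _),
        cmvCharWindow_apply_of_ne _ _ _ (Fin.succ_ne_zero _)]
      simp only [Fin.val_succ, Fin.val_zero, Fin.val_one, Nat.cast_one, Nat.cast_zero,
        Nat.cast_ofNat, add_zero, zero_add, one_add_one_eq_two]
      rw [cmvEntry_add_one_self_of_odd α a ha, cmvEntry_add_two_self_of_odd α a ha]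
      ring
    · intro i
      simp only [cmvMinor₀₁, submatrix_apply, Fin.one_succAbove_zero]
      rw [cmvCharWindow_apply_of_ne _ _ _ (Fin.succ_ne_zero _), neg_eq_zero]
      simp only [Fin.val_succ, Fin.val_zero, Nat.cast_zero, add_zero]
      exact cmvEntry_eq_zero_below_of_add_three_le α _ _ (by push_cast; omega)

end Expansion

section Tail

variable (α : ℤ → ℂ) (z : ℂ)

def cmvTail : ℕ → ℤ → ℂ
  | 0, _ => 0
  | t + 1, a => conj (α a) * windowDet α z (a + 1) t + (rhoC α a : ℂ) ^ 2 * cmvTail t (a + 1)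

theorem windowDet_zero (a : ℤ) : windowDet α z a 0 = 1 := by
  simp [windowDet, windowPoly]

theorem det_cmvMinor (s : ℕ) (a : ℤ) :
    (cmvMinor α z a (s + 1)).det = -rhoC α a * cmvTail α z (s + 1) (a + 1) := by
  induction s generalizing a with
  | zero => rw [det_cmvMinor_one, cmvTail, cmvTail, windowDet_zero]; ring
  | succ s ih =>
    conv_rhs => rw [cmvTail]
    rw [det_cmvMinor_succ_succ, ih, add_assoc, one_add_one_eq_two]
    ring

theorem windowDet_succ_succ (a : ℤ) (s : ℕ) :
    windowDet α z a (s + 2) = (z + conj (α a) * α (a - 1)) * windowDet α z (a + 1) (s + 1)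
      + α (a - 1) * (rhoC α a : ℂ) ^ 2 * cmvTail α z (s + 1) (a + 1) := by
  rw [windowDet_succ_succ_eq_sub_cmvMinor, det_cmvMinor]
  ring

theorem cmvTail_eq_sum (t : ℕ) (a : ℤ) :
    cmvTail α z t a = ∑ i ∈ Finset.range t, conj (α (a + i)) *
      (∏ j ∈ Finset.range i, (rhoC α (a + j) : ℂ) ^ 2) *
        windowDet α z (a + i + 1) (t - 1 - i) := by
  induction t generalizing a with
  | zero => simp [cmvTail]
  | succ t ih =>
    rw [Finset.sum_range_succ', cmvTail, ih, Finset.mul_sum, add_comm]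
    congr 1
    · refine Finset.sum_congr rfl fun i _ => ?_
      rw [Finset.prod_range_succ', show t + 1 - 1 - (i + 1) = t - 1 - i by omega]
      push_cast
      ring_nf
    · simp

end Tail

theorem windowDet_cofactor_expansion_general (α : ℤ → ℂ)
    (n k : ℕ) (hkn : k < n - 1) (z : ℂ) :
    windowDet α z k (n - k) =
      (z + conj (α k) * α ((k : ℤ) - 1)) * windowDet α z (k + 1) (n - 1 - k) +
      ∑ m ∈ Finset.Icc (k + 1) (n - 1),
        conj (α m) * α ((k : ℤ) - 1) *
          (∏ j ∈ Finset.Icc k (m - 1), (rhoC α j : ℂ) ^ 2) *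
          windowDet α z ((m : ℤ) + 1) (n - 1 - m) := by
  obtain ⟨s, rfl⟩ : ∃ s, n = k + s + 2 := ⟨n - k - 2, by omega⟩
  rw [show k + s + 2 - k = s + 2 by omega, show k + s + 2 - 1 - k = s + 1 by omega,
    windowDet_succ_succ, cmvTail_eq_sum, Finset.mul_sum, ← Finset.Ico_add_one_right_eq_Icc,
    Finset.sum_Ico_eq_sum_range, show k + s + 2 - 1 + 1 - (k + 1) = s + 1 by omega]
  congr 1
  refine Finset.sum_congr rfl fun i _ => ?_
  rw [show k + 1 + i - 1 = k + i by omega, ← Finset.Ico_add_one_right_eq_Icc,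
    Finset.prod_Ico_eq_prod_range, show k + i + 1 - k = i + 1 by omega, Finset.prod_range_succ',
    show k + s + 2 - 1 - (k + 1 + i) = s + 1 - 1 - i by omega]
  push_cast
  ring_nf

theorem windowDet_cofactor_expansion (α : ℤ → ℂ) (hα : ∀ j, ‖α j‖ < 1)
    (n k : ℕ) (hk : 1 ≤ k) (hkn : k < n - 1) (z : ℂ) :
    windowDet α z k (n - k) =
      (z + conj (α k) * α ((k : ℤ) - 1)) * windowDet α z (k + 1) (n - 1 - k) +
      ∑ m ∈ Finset.Icc (k + 1) (n - 1),
        conj (α m) * α ((k : ℤ) - 1) *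
          (∏ j ∈ Finset.Icc k (m - 1), (rhoC α j : ℂ) ^ 2) *
          windowDet α z ((m : ℤ) + 1) (n - 1 - m) :=
  windowDet_cofactor_expansion_general α n k hkn z
end
end

section
/- The following two expressions are equal: det(z - C_{[0,n-1]}) - z·det(z - E_{[1,n-1]}) and (z·det(z - E_{[1,n-1]}) - det(z - E_{[0,n-1]}))/α_{-1}, whenever α_{-1} ≠ 0; equivalently, z·det(z - E_{[1,n-1]}) - det(z - E_{[0,n-1]}) = α_{-1}·(det(z - C_{[0,n-1]}) - z·det(z - E_{[1,n-1]})). -/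
open Polynomial Matrix Complex
open scoped ComplexConjugate

noncomputable section

/-! `E_{[0,n-1]}` and `C_{[0,n-1]}` agree off column 0, and column 0 of the CMV matrix depends on
`α_{-1}` only through the factor `α_{-1}`; since `C` corresponds to `α_{-1} = -1`, column 0 of
`E_{[0,n-1]}` is `-α_{-1}` times that of `C_{[0,n-1]}`. Expanding `det (z - M)` along column 0,
`det (z - M) - z det (z - M_{[1,n-1]})` is linear in the column of `M` (the `z` on the diagonal
accounts for the subtracted term), so it also scales by `-α_{-1}` from `C` to `E`. -/

namespace Matrix

variable {R : Type*} [CommRing R] {m : ℕ}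

theorem det_updateCol_zero_single (A : Matrix (Fin (m + 1)) (Fin (m + 1)) R) (r : R) :
    det (updateCol A 0 (Pi.single 0 r)) = r * det (A.submatrix Fin.succ Fin.succ) := by
  rw [det_succ_column_zero, Fintype.sum_eq_single 0 fun i hi => by simp [hi]]
  simp only [updateCol_self, Pi.single_eq_same, Fin.val_zero, pow_zero, one_mul,
    ← Fin.succAbove_zero, submatrix_updateCol_succAbove]

theorem det_scalar_sub_updateCol_zero_smul (M : Matrix (Fin (m + 1)) (Fin (m + 1)) R)
    (z t : R) :
    det (scalar _ z - updateCol M 0 (t • fun i => M i 0)) -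
        z * det (scalar _ z - M.submatrix Fin.succ Fin.succ) =
      t * (det (scalar _ z - M) - z * det (scalar _ z - M.submatrix Fin.succ Fin.succ)) := by
  have hcol (s : R) : scalar _ z - updateCol M 0 (s • fun i => M i 0) =
      updateCol (scalar _ z - M) 0 (Pi.single 0 z - s • fun i => M i 0) := by
    ext i j
    rcases eq_or_ne j 0 with rfl | hj
    · simp [Pi.single_apply, diagonal_apply]
    · simp [hj]
  have hsub : (scalar _ z - M).submatrix Fin.succ Fin.succ =
      scalar _ z - M.submatrix Fin.succ Fin.succ := by
    simp [submatrix_sub, scalar_apply, submatrix_diagonal _ _ (Fin.succ_injective _)]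
  have hdet (s : R) : det (scalar _ z - updateCol M 0 (s • fun i => M i 0)) =
      z * det (scalar _ z - M.submatrix Fin.succ Fin.succ) -
        s * det (updateCol (scalar _ z - M) 0 fun i => M i 0) := by
    rw [hcol, sub_eq_add_neg _ (s • _), det_updateCol_add, ← neg_smul, det_updateCol_smul,
      det_updateCol_zero_single, hsub]
    ring
  have hM : M = updateCol M 0 ((1 : R) • fun i => M i 0) := by
    ext i j; rcases eq_or_ne j 0 with rfl | hj <;> simp [*]
  rw [hdet, hM, hdet, ← hM]
  ring

end Matrix

theorem windowDet_eq_det (α : ℤ → ℂ) (z : ℂ) (a : ℤ) (m : ℕ) :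
    windowDet α z a m = det (scalar _ z - cmvWindow α a m) := by
  rw [windowDet, ← eval_charpoly, windowPoly, charpoly, charmatrix, scalar_apply,
    ← smul_one_eq_diagonal]
  rfl

theorem cmvWindow_submatrix_succ (α : ℤ → ℂ) (a : ℤ) (m : ℕ) :
    (cmvWindow α a (m + 1)).submatrix Fin.succ Fin.succ = cmvWindow α (a + 1) m := by
  ext i j
  simp only [cmvWindow, submatrix_apply, of_apply, Fin.val_succ]
  push_cast
  ring_nf

section Congr

variable {α γ : ℤ → ℂ}

theorem rhoC_congr (h : ∀ k, 0 ≤ k → α k = γ k) {k : ℤ} (hk : 0 ≤ k) : rhoC α k = rhoC γ k := by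
  rw [rhoC, rhoC, h k hk]

theorem cmvEntry_congr (h : ∀ k, 0 ≤ k → α k = γ k) {i j : ℤ} (hi : 0 ≤ i) (hj : 0 < j) :
    cmvEntry α i j = cmvEntry γ i j := by
  unfold cmvEntry
  split_ifs <;> first
    | rfl
    | rw [h _ (by omega), h _ (by omega)]
    | rw [h _ (by omega), rhoC_congr h (by omega)]
    | rw [rhoC_congr h (by omega), rhoC_congr h (by omega)]

theorem mul_cmvEntry_zero (h : ∀ k, 0 ≤ k → α k = γ k) {i : ℤ} (hi : 0 ≤ i) :
    γ (-1) * cmvEntry α i 0 = α (-1) * cmvEntry γ i 0 := by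
  obtain rfl | rfl | hi2 : i = 0 ∨ i = 1 ∨ 2 ≤ i := by omega
  · simp [cmvEntry, h 0 le_rfl]
    ring
  · simp [cmvEntry, rhoC_congr h le_rfl]
    ring
  · unfold cmvEntry; split_ifs <;> first | (exfalso; omega) | simp

end Congr

theorem halfAlpha_of_nonneg (α : ℤ → ℂ) {k : ℤ} (hk : 0 ≤ k) :
    halfAlpha (fun k : ℕ => α k) k = α k := by
  simp [halfAlpha, not_lt.2 hk, Int.toNat_of_nonneg hk]

theorem halfAlpha_neg_one (α : ℕ → ℂ) : halfAlpha α (-1) = -1 := by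
  simp [halfAlpha]

theorem cmvWindow_eq_updateCol_halfAlpha (α : ℤ → ℂ) (m : ℕ) :
    cmvWindow α 0 (m + 1) = updateCol (cmvWindow (halfAlpha fun k : ℕ => α k) 0 (m + 1)) 0
      (-α (-1) • fun i => cmvWindow (halfAlpha fun k : ℕ => α k) 0 (m + 1) i 0) := by
  have hagree (k : ℤ) (hk : 0 ≤ k) : α k = halfAlpha (fun k : ℕ => α k) k :=
    (halfAlpha_of_nonneg α hk).symm
  ext i j
  rcases eq_or_ne j 0 with rfl | hj
  · have hcol := mul_cmvEntry_zero hagree (i := i) (by positivity)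
    rw [halfAlpha_neg_one] at hcol
    simp only [updateCol_self, cmvWindow, of_apply, Pi.smul_apply, smul_eq_mul, Fin.val_zero,
      Nat.cast_zero, zero_add]
    linear_combination -hcol
  · simp only [updateCol_ne hj, cmvWindow, of_apply]
    exact cmvEntry_congr hagree (by positivity) (by simpa [Fin.pos_iff_ne_zero] using hj)

theorem half_line_extended_determinant_relation_general (α : ℤ → ℂ)
    (n : ℕ) (hn : 1 ≤ n) (z : ℂ)
    (h0 : α (-1) ≠ 0) :
    windowDet (halfAlpha fun k : ℕ => α k) z 0 n - z * windowDet α z 1 (n - 1) =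
        (z * windowDet α z 1 (n - 1) - windowDet α z 0 n) / α (-1) ∧
      z * windowDet α z 1 (n - 1) - windowDet α z 0 n =
        α (-1) *
          (windowDet (halfAlpha fun k : ℕ => α k) z 0 n -
            z * windowDet α z 1 (n - 1)) := by
  obtain ⟨m, rfl⟩ : ∃ m, n = m + 1 := ⟨n - 1, by omega⟩
  set C := cmvWindow (halfAlpha fun k : ℕ => α k) 0 (m + 1)
  have hE := cmvWindow_eq_updateCol_halfAlpha α m
  have hsub : cmvWindow α 1 m = C.submatrix Fin.succ Fin.succ := by
    rw [show (1 : ℤ) = 0 + 1 by rfl, ← cmvWindow_submatrix_succ, hE, ← Fin.succAbove_zero,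
      submatrix_updateCol_succAbove]
  have hscale := det_scalar_sub_updateCol_zero_smul C z (-α (-1))
  rw [← hE, ← hsub] at hscale
  simp only [windowDet_eq_det, Nat.add_sub_cancel]
  constructor
  · rw [eq_div_iff h0]
    linear_combination hscale
  · linear_combination -hscale

theorem half_line_extended_determinant_relation (α : ℤ → ℂ)
    (hα : ∀ k, ‖α k‖ < 1) (n : ℕ) (hn : 1 ≤ n) (z : ℂ)
    (h0 : α (-1) ≠ 0) :
    windowDet (halfAlpha fun k : ℕ => α k) z 0 n - z * windowDet α z 1 (n - 1) =
        (z * windowDet α z 1 (n - 1) - windowDet α z 0 n) / α (-1) ∧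
      z * windowDet α z 1 (n - 1) - windowDet α z 0 n =
        α (-1) *
          (windowDet (halfAlpha fun k : ℕ => α k) z 0 n -
            z * windowDet α z 1 (n - 1)) :=
  half_line_extended_determinant_relation_general α n hn z h0
end
end

section
/- For |z| = 1, the norm of the n-step Szegő transfer matrix satisfies ‖S^z_n‖ ≤ 8 (∏_{j=0}^{n-1} ρ_j^{-1}) · max{|det(z - C_{[0,n-1]})|, |det(z - C_{[1,n-1]})|}. -/
open Polynomial Matrix Complex
open scoped ComplexConjugate

noncomputable section

/-!
Up to the scalar `∏ ρ_j⁻¹`, the transfer matrix `S^z_n` is the product `T_n` of the matrices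
`[[z, -ᾱ], [-α z, 1]]`. For `|z| = 1` the second row of `T_n` is `zⁿ` times the conjugate of the
first one, reversed, so `‖T_n‖` is at most twice the sum of the moduli of its first row.

That first row is `(z B, A - z B)` with `A = det(z - C_{[0,n-1]})` and `B = det(z - C_{[1,n-1]})`,
which gives `‖T_n‖ ≤ 2 (|A| + 2 |B|) ≤ 6 max(|A|, |B|)`. It is proved by induction on `n`,
splitting off the first Szegő factor. Shifting the Verblunsky coefficients by one transposes the
CMV matrix, so `det(z - C_{[1,n]})` equals `det(z - C'_{[0,n-1]})` for the shifted coefficients,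
and two cofactor expansions (of `A` along its first column, of the auxiliary minor `P` along its
first row) close the recursion. The convention `α_{-1} = -1` is not stable under the shift, so the
induction is run for an arbitrary `α_{-1}`, with `-ᾱ_0 B + ρ_0 P` in place of `A - z B`.
-/

theorem Matrix.norm_toEuclideanCLM_le_sum_norm {𝕜 ι : Type*} [RCLike 𝕜] [Fintype ι]
    [DecidableEq ι] (M : Matrix ι ι 𝕜) :
    ‖toEuclideanCLM (𝕜 := 𝕜) M‖ ≤ ∑ i, ∑ j, ‖M i j‖ := by
  refine ContinuousLinearMap.opNorm_le_bound _ (by positivity) fun x => ?_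
  set y := toEuclideanCLM (𝕜 := 𝕜) M x
  have hrow (i : ι) : ‖y i‖ ≤ (∑ j, ‖M i j‖) * ‖x‖ := calc
    ‖y i‖ = ‖∑ j, M i j * x j‖ := rfl
    _ ≤ ∑ j, ‖M i j‖ * ‖x j‖ := (norm_sum_le _ _).trans_eq (by simp only [norm_mul])
    _ ≤ ∑ j, ‖M i j‖ * ‖x‖ := by gcongr with j; exact PiLp.norm_apply_le x j
    _ = (∑ j, ‖M i j‖) * ‖x‖ := (Finset.sum_mul ..).symm
  have hy : ‖y‖ ≤ ∑ i, ‖y i‖ := by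
    rw [EuclideanSpace.norm_eq]
    exact Real.sqrt_le_iff.mpr ⟨by positivity,
      Finset.sum_sq_le_sq_sum_of_nonneg fun i _ => norm_nonneg _⟩
  calc ‖y‖ ≤ ∑ i, ‖y i‖ := hy
    _ ≤ ∑ i, (∑ j, ‖M i j‖) * ‖x‖ := Finset.sum_le_sum fun i _ => hrow i
    _ = (∑ i, ∑ j, ‖M i j‖) * ‖x‖ := (Finset.sum_mul ..).symm

theorem Matrix.det_succ_column_zero_two {R : Type*} [CommRing R] {n : ℕ}
    (M : Matrix (Fin (n + 2)) (Fin (n + 2)) R) (h : ∀ i : Fin n, M i.succ.succ 0 = 0) :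
    M.det = M 0 0 * (M.submatrix Fin.succ Fin.succ).det
      - M 1 0 * (M.submatrix (Fin.succAbove 1) Fin.succ).det := by
  rw [det_succ_column_zero, Fin.sum_univ_succ, Fin.sum_univ_succ,
    Finset.sum_eq_zero fun i _ => by rw [h, mul_zero, zero_mul]]
  simp [sub_eq_add_neg]

theorem Matrix.det_succ_row_zero_two {R : Type*} [CommRing R] {n : ℕ}
    (M : Matrix (Fin (n + 2)) (Fin (n + 2)) R) (h : ∀ j : Fin n, M 0 j.succ.succ = 0) :
    M.det = M 0 0 * (M.submatrix Fin.succ Fin.succ).det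
      - M 0 1 * (M.submatrix Fin.succ (Fin.succAbove 1)).det := by
  rw [← det_transpose, det_succ_column_zero_two _ h, ← transpose_submatrix,
    ← transpose_submatrix, det_transpose, det_transpose, transpose_apply, transpose_apply]

theorem rhoC_shift (γ : ℤ → ℂ) (j : ℤ) : rhoC (fun t => γ (t + 1)) j = rhoC γ (j + 1) := rfl

theorem rhoC_sq_add_conj_mul_self (γ : ℤ → ℂ) {j : ℤ} (h : ‖γ j‖ ≤ 1) :
    (rhoC γ j : ℂ) ^ 2 + conj (γ j) * γ j = 1 := by
  rw [← Complex.ofReal_pow, rhoC, Real.sq_sqrt (by nlinarith [norm_nonneg (γ j)]),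
    Complex.conj_mul']
  push_cast
  ring

/-- Shifting the coefficients by one transposes the CMV matrix: its odd columns have the shape of
its even rows, and vice versa. -/
theorem cmvEntry_add_one_add_one (γ : ℤ → ℂ) (i k : ℤ) :
    cmvEntry γ (i + 1) (k + 1) = cmvEntry (fun t => γ (t + 1)) k i := by
  unfold cmvEntry rhoC
  split_ifs <;> first | rfl | (exfalso; omega) | skip
  all_goals
    first
      | (have hk : k = i - 2 := by omega); subst hk
      | (have hk : k = i - 1 := by omega); subst hk
      | (have hk : k = i := by omega); subst hk
      | (have hk : k = i + 1 := by omega); subst hk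
      | (have hk : k = i + 2 := by omega); subst hk
    ring_nf

theorem cmvEntry_eq_zero_of_add_three_le (γ : ℤ → ℂ) {i k : ℤ} (h : i + 3 ≤ k) :
    cmvEntry γ i k = 0 := by
  unfold cmvEntry
  split_ifs <;> first | rfl | omega

theorem cmvEntry_eq_zero_of_even_of_add_two_le (γ : ℤ → ℂ) {i k : ℤ} (hk : k % 2 = 0)
    (h : k + 2 ≤ i) : cmvEntry γ i k = 0 := by
  unfold cmvEntry
  split_ifs <;> first | rfl | omega

/-- Every minor met in the cofactor expansions below is of this form, so identifying two of them
comes down to comparing their row and column index maps. -/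
def cmvCharMinor (γ : ℤ → ℂ) (z : ℂ) {m : ℕ} (r c : Fin m → ℤ) : Matrix (Fin m) (Fin m) ℂ :=
  Matrix.of fun i j => (if r i = c j then z else 0) - cmvEntry γ (r i) (c j)

theorem cmvCharMinor_submatrix (γ : ℤ → ℂ) (z : ℂ) {m n : ℕ} (r c : Fin m → ℤ)
    (f g : Fin n → Fin m) :
    (cmvCharMinor γ z r c).submatrix f g = cmvCharMinor γ z (r ∘ f) (c ∘ g) := rfl

theorem cmvCharMinor_transpose (γ : ℤ → ℂ) (z : ℂ) {m : ℕ} (r c : Fin m → ℤ) :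
    (cmvCharMinor γ z r c)ᵀ =
      cmvCharMinor (fun t => γ (t + 1)) z (fun j => c j - 1) (fun i => r i - 1) := by
  ext j i
  simp only [cmvCharMinor, transpose_apply, of_apply, sub_left_inj, eq_comm (a := c j)]
  rw [← cmvEntry_add_one_add_one, sub_add_cancel, sub_add_cancel]

theorem det_cmvCharMinor_eq_shift (γ : ℤ → ℂ) (z : ℂ) {m : ℕ} (r c : Fin m → ℤ) :
    (cmvCharMinor γ z r c).det =
      (cmvCharMinor (fun t => γ (t + 1)) z (fun j => c j - 1) (fun i => r i - 1)).det := by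
  rw [← cmvCharMinor_transpose, det_transpose]

theorem windowDet_eq_det_cmvCharMinor (γ : ℤ → ℂ) (z : ℂ) (a : ℤ) (m : ℕ) :
    windowDet γ z a m = (cmvCharMinor γ z (fun i : Fin m => a + i) (fun i => a + i)).det := by
  rw [windowDet, windowPoly, ← Polynomial.coe_evalRingHom, RingHom.map_det]
  congr 1
  ext i j
  simp [cmvCharMinor, cmvWindow, Matrix.one_apply, Fin.ext_iff, apply_ite]

theorem Pmat_eq_cmvCharMinor (γ : ℤ → ℂ) (z : ℂ) (m : ℕ) :
    Pmat γ z m = cmvCharMinor γ z (fun i : Fin m => ((Fin.succAbove 1 i : Fin (m + 1)) : ℕ))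
      (fun j => 1 + (j : ℕ)) := by
  ext i j
  simp [Pmat, cmvCharMinor, cmvWindow, Matrix.one_apply, Fin.ext_iff, add_comm]
  norm_cast

theorem windowDet_one_eq_shift (γ : ℤ → ℂ) (z : ℂ) (m : ℕ) :
    windowDet γ z 1 m = windowDet (fun t => γ (t + 1)) z 0 m := by
  rw [windowDet_eq_det_cmvCharMinor, windowDet_eq_det_cmvCharMinor, det_cmvCharMinor_eq_shift]
  simp only [add_sub_cancel_left, zero_add]

theorem windowDet_zero_add_two (γ : ℤ → ℂ) (z : ℂ) (m : ℕ) :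
    windowDet γ z 0 (m + 2) = (z + conj (γ 0) * γ (-1)) * windowDet γ z 1 (m + 1)
      - rhoC γ 0 * γ (-1) * (Pmat γ z (m + 1)).det := by
  rw [windowDet_eq_det_cmvCharMinor]
  set M := cmvCharMinor γ z (fun i : Fin (m + 2) => (0 : ℤ) + (i : ℕ)) (fun i => 0 + (i : ℕ))
  have h00 : M 0 0 = z + conj (γ 0) * γ (-1) := by simp [M, cmvCharMinor, cmvEntry]
  have h10 : M 1 0 = rhoC γ 0 * γ (-1) := by simp [M, cmvCharMinor, cmvEntry]
  have hlow (i : Fin m) : M i.succ.succ 0 = 0 := by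
    simp only [M, cmvCharMinor, of_apply]
    rw [cmvEntry_eq_zero_of_even_of_add_two_le _ (by simp) (by simp; omega),
      if_neg (by simp; omega), sub_zero]
  have hwindow : (M.submatrix Fin.succ Fin.succ).det = windowDet γ z 1 (m + 1) := by
    rw [cmvCharMinor_submatrix, windowDet_eq_det_cmvCharMinor]
    simp [Function.comp_def, add_comm]
  have hPmat : (M.submatrix (Fin.succAbove 1) Fin.succ).det = (Pmat γ z (m + 1)).det := by
    rw [cmvCharMinor_submatrix, Pmat_eq_cmvCharMinor]
    simp [Function.comp_def, add_comm]
  rw [det_succ_column_zero_two M hlow, h00, h10, hwindow, hPmat]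

theorem det_Pmat_add_two (γ : ℤ → ℂ) (z : ℂ) (m : ℕ) :
    (Pmat γ z (m + 2)).det =
      -(conj (γ 1) * rhoC γ 0) * windowDet (fun t => γ (t + 1)) z 1 (m + 1)
        + rhoC γ 1 * rhoC γ 0 * (Pmat (fun t => γ (t + 1)) z (m + 1)).det := by
  rw [Pmat_eq_cmvCharMinor]
  set M := cmvCharMinor γ z (fun i : Fin (m + 2) => ((Fin.succAbove 1 i : Fin (m + 3)) : ℕ))
    (fun j => 1 + (j : ℕ))
  have h00 : M 0 0 = -(conj (γ 1) * rhoC γ 0) := by simp [M, cmvCharMinor, cmvEntry]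
  have h01 : M 0 1 = -(rhoC γ 1 * rhoC γ 0) := by simp [M, cmvCharMinor, cmvEntry]
  have hright (j : Fin m) : M 0 j.succ.succ = 0 := by
    simp only [M, cmvCharMinor, of_apply]
    rw [cmvEntry_eq_zero_of_add_three_le _ (by simp; omega), if_neg (by simp; omega), sub_zero]
  have hwindow : (M.submatrix Fin.succ Fin.succ).det =
      windowDet (fun t => γ (t + 1)) z 1 (m + 1) := by
    rw [cmvCharMinor_submatrix, det_cmvCharMinor_eq_shift, windowDet_eq_det_cmvCharMinor]
    simp [add_comm]
  have hPmat : (M.submatrix Fin.succ (Fin.succAbove 1)).det =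
      (Pmat (fun t => γ (t + 1)) z (m + 1)).det := by
    rw [cmvCharMinor_submatrix, det_cmvCharMinor_eq_shift, Pmat_eq_cmvCharMinor]
    simp [add_comm]
  rw [det_succ_row_zero_two M hright, h00, h01, hwindow, hPmat]
  ring

def unnormalizedSzego (z a : ℂ) : Matrix (Fin 2) (Fin 2) ℂ := !![z, -conj a; -a * z, 1]

def unnormalizedSzegoTransfer (α : ℕ → ℂ) (z : ℂ) : ℕ → Matrix (Fin 2) (Fin 2) ℂ
  | 0 => 1
  | n + 1 => unnormalizedSzego z (α n) * unnormalizedSzegoTransfer α z n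

theorem szegoTransfer_eq_smul (α : ℕ → ℂ) (z : ℂ) (n : ℕ) :
    szegoTransfer α z n = ((∏ j ∈ Finset.range n, (Real.sqrt (1 - ‖α j‖ ^ 2))⁻¹ : ℝ) : ℂ) •
      unnormalizedSzegoTransfer α z n := by
  induction n with
  | zero => simp [szegoTransfer, unnormalizedSzegoTransfer]
  | succ n ih =>
    rw [szegoTransfer, unnormalizedSzegoTransfer, ih, szego, ← unnormalizedSzego,
      smul_mul_smul_comm, Finset.prod_range_succ, mul_comm, Complex.ofReal_mul, Complex.ofReal_inv]

theorem unnormalizedSzegoTransfer_succ' (α : ℕ → ℂ) (z : ℂ) (n : ℕ) :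
    unnormalizedSzegoTransfer α z (n + 1) =
      unnormalizedSzegoTransfer (fun k => α (k + 1)) z n * unnormalizedSzego z (α 0) := by
  induction n with
  | zero => simp [unnormalizedSzegoTransfer]
  | succ n ih => rw [unnormalizedSzegoTransfer, ih, unnormalizedSzegoTransfer, mul_assoc]

theorem unnormalizedSzegoTransfer_succ_first_row (α : ℕ → ℂ) (z : ℂ) (n : ℕ) :
    unnormalizedSzegoTransfer α z (n + 1) 0 0 =
      z * (unnormalizedSzegoTransfer (fun k => α (k + 1)) z n 0 0
        - α 0 * unnormalizedSzegoTransfer (fun k => α (k + 1)) z n 0 1) ∧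
    unnormalizedSzegoTransfer α z (n + 1) 0 1 =
      unnormalizedSzegoTransfer (fun k => α (k + 1)) z n 0 1
        - conj (α 0) * unnormalizedSzegoTransfer (fun k => α (k + 1)) z n 0 0 := by
  simp only [unnormalizedSzegoTransfer_succ', unnormalizedSzego, mul_apply, Fin.sum_univ_two,
    of_apply, cons_val', cons_val_zero, cons_val_one, cons_val_fin_one]
  constructor <;> ring

theorem unnormalizedSzegoTransfer_row_one (α : ℕ → ℂ) {z : ℂ} (hz : ‖z‖ = 1) (n : ℕ) :
    unnormalizedSzegoTransfer α z n 1 0 = z ^ n * conj (unnormalizedSzegoTransfer α z n 0 1) ∧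
    unnormalizedSzegoTransfer α z n 1 1 = z ^ n * conj (unnormalizedSzegoTransfer α z n 0 0) := by
  have hzz : z * conj z = 1 := by
    rw [Complex.mul_conj, Complex.normSq_eq_norm_sq, hz]; norm_num
  induction n with
  | zero => simp [unnormalizedSzegoTransfer]
  | succ n ih =>
    have hzn : z ^ n * conj z ^ n = 1 := by rw [← mul_pow, hzz, one_pow]
    obtain ⟨h10, h11⟩ := ih
    simp only [unnormalizedSzegoTransfer, unnormalizedSzego, mul_apply, Fin.sum_univ_two, of_apply,
      cons_val', cons_val_zero, cons_val_one, cons_val_fin_one, h10, h11, map_add, map_mul,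
      map_neg, map_pow, Complex.conj_conj]
    constructor
    · linear_combination (α n * z * unnormalizedSzegoTransfer α z n 0 0) * hzn
        - (z ^ n * conj (unnormalizedSzegoTransfer α z n 0 1)) * hzz
    · linear_combination (α n * z * unnormalizedSzegoTransfer α z n 0 1) * hzn
        - (z ^ n * conj (unnormalizedSzegoTransfer α z n 0 0)) * hzz

theorem norm_toEuclideanCLM_unnormalizedSzegoTransfer_le (α : ℕ → ℂ) {z : ℂ} (hz : ‖z‖ = 1)
    (n : ℕ) :
    ‖toEuclideanCLM (𝕜 := ℂ) (unnormalizedSzegoTransfer α z n)‖ ≤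
      2 * (‖unnormalizedSzegoTransfer α z n 0 0‖ + ‖unnormalizedSzegoTransfer α z n 0 1‖) := by
  obtain ⟨h10, h11⟩ := unnormalizedSzegoTransfer_row_one α hz n
  refine (norm_toEuclideanCLM_le_sum_norm _).trans_eq ?_
  simp only [Fin.sum_univ_two, h10, h11, norm_mul, norm_pow, hz, one_pow, one_mul,
    Complex.norm_conj]
  ring

/-- The formula fails for `n + 2 = 1`, where the empty determinant `Pmat γ z 0` is `1`. -/
theorem unnormalizedSzegoTransfer_first_row (γ : ℤ → ℂ) (hγ : ∀ k : ℕ, ‖γ k‖ ≤ 1) (z : ℂ)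
    (n : ℕ) :
    unnormalizedSzegoTransfer (fun k : ℕ => γ k) z (n + 2) 0 0 = z * windowDet γ z 1 (n + 1) ∧
    unnormalizedSzegoTransfer (fun k : ℕ => γ k) z (n + 2) 0 1 =
      -conj (γ 0) * windowDet γ z 1 (n + 1) + rhoC γ 0 * (Pmat γ z (n + 1)).det := by
  have hρ0 := rhoC_sq_add_conj_mul_self γ (j := 0) (by simpa using hγ 0)
  induction n generalizing γ with
  | zero =>
    have hB : windowDet γ z 1 1 = z + conj (γ 1) * γ 0 := by
      simp [windowDet_eq_det_cmvCharMinor, cmvCharMinor, cmvEntry]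
    have hP : (Pmat γ z 1).det = -(conj (γ 1) * rhoC γ 0) := by
      simp [Pmat_eq_cmvCharMinor, cmvCharMinor, cmvEntry]
    simp only [unnormalizedSzegoTransfer, unnormalizedSzego, mul_one, mul_apply, Fin.sum_univ_two,
      of_apply, cons_val', cons_val_zero, cons_val_one, cons_val_fin_one, Nat.cast_zero,
      Nat.cast_one, hB, hP]
    exact ⟨by ring, by linear_combination conj (γ 1) * hρ0⟩
  | succ n ih =>
    have hγ' (k : ℕ) : ‖γ ((k : ℤ) + 1)‖ ≤ 1 := by simpa using hγ (k + 1)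
    obtain ⟨h00, h01⟩ := ih (fun t => γ (t + 1)) hγ' (rhoC_sq_add_conj_mul_self _ (hγ' 0))
    obtain ⟨s00, s01⟩ := unnormalizedSzegoTransfer_succ_first_row (fun k : ℕ => γ k) z (n + 2)
    simp only [Nat.cast_add, Nat.cast_one, Nat.cast_zero] at s00 s01
    rw [s00, s01, h00, h01, windowDet_one_eq_shift γ z (n + 2), windowDet_zero_add_two _ z n,
      det_Pmat_add_two γ z n]
    simp only [rhoC_shift, zero_add, show (-1 : ℤ) + 1 = 0 by norm_num]
    set B := windowDet (fun t => γ (t + 1)) z 1 (n + 1)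
    set P := (Pmat (fun t => γ (t + 1)) z (n + 1)).det
    exact ⟨by ring, by linear_combination (conj (γ 1) * B - rhoC γ 1 * P) * hρ0⟩

theorem unnormalizedSzegoTransfer_first_row_halfAlpha (α : ℕ → ℂ) (hα : ∀ k, ‖α k‖ ≤ 1)
    (z : ℂ) (n : ℕ) :
    unnormalizedSzegoTransfer α z (n + 1) 0 0 = z * windowDet (halfAlpha α) z 1 n ∧
    unnormalizedSzegoTransfer α z (n + 1) 0 1 =
      windowDet (halfAlpha α) z 0 (n + 1) - z * windowDet (halfAlpha α) z 1 n := by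
  cases n with
  | zero =>
    simp [unnormalizedSzegoTransfer, unnormalizedSzego, windowDet_eq_det_cmvCharMinor,
      cmvCharMinor, cmvEntry, halfAlpha]
  | succ n =>
    have hrestrict (k : ℕ) : halfAlpha α k = α k := by simp [halfAlpha]
    obtain ⟨h00, h01⟩ := unnormalizedSzegoTransfer_first_row (halfAlpha α)
      (fun k => hrestrict k ▸ hα k) z n
    rw [funext hrestrict] at h00 h01
    refine ⟨h00, ?_⟩
    rw [h01, windowDet_zero_add_two, show halfAlpha α (-1) = -1 by simp [halfAlpha]]
    ring

theorem norm_toEuclideanCLM_unnormalizedSzegoTransfer_le_max (α : ℕ → ℂ) (hα : ∀ k, ‖α k‖ ≤ 1)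
    {z : ℂ} (hz : ‖z‖ = 1) (n : ℕ) :
    ‖toEuclideanCLM (𝕜 := ℂ) (unnormalizedSzegoTransfer α z n)‖ ≤
      6 * max ‖windowDet (halfAlpha α) z 0 n‖ ‖windowDet (halfAlpha α) z 1 (n - 1)‖ := by
  refine (norm_toEuclideanCLM_unnormalizedSzegoTransfer_le α hz n).trans ?_
  cases n with
  | zero =>
    norm_num [unnormalizedSzegoTransfer, windowDet_eq_det_cmvCharMinor]
  | succ n =>
    obtain ⟨h00, h01⟩ := unnormalizedSzegoTransfer_first_row_halfAlpha α hα z n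
    set A := windowDet (halfAlpha α) z 0 (n + 1)
    set B := windowDet (halfAlpha α) z 1 n
    have hA : ‖A‖ ≤ max ‖A‖ ‖B‖ := le_max_left _ _
    have hB : ‖B‖ ≤ max ‖A‖ ‖B‖ := le_max_right _ _
    have hv : ‖A - z * B‖ ≤ ‖A‖ + ‖B‖ := by
      simpa [hz] using norm_sub_le A (z * B)
    rw [h00, h01, norm_mul, hz, one_mul, Nat.add_sub_cancel]
    linarith

theorem szegoTransfer_norm_upper_bound (α : ℕ → ℂ)
    (hα : ∀ k, ‖α k‖ < 1) (n : ℕ) (z : ℂ) (hz : ‖z‖ = 1) :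
    ‖Matrix.toEuclideanCLM (𝕜 := ℂ) (szegoTransfer α z n)‖ ≤
      8 * (∏ j ∈ Finset.range n, (Real.sqrt (1 - ‖α j‖ ^ 2))⁻¹) *
        max ‖windowDet (halfAlpha α) z 0 n‖
          ‖windowDet (halfAlpha α) z 1 (n - 1)‖ := by
  set ρ := ∏ j ∈ Finset.range n, (Real.sqrt (1 - ‖α j‖ ^ 2))⁻¹
  set M := max ‖windowDet (halfAlpha α) z 0 n‖ ‖windowDet (halfAlpha α) z 1 (n - 1)‖
  have hρ : 0 ≤ ρ := by positivity
  have hM : 0 ≤ M := (norm_nonneg _).trans (le_max_left _ _)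
  rw [szegoTransfer_eq_smul, map_smul, norm_smul, Complex.norm_real, Real.norm_of_nonneg hρ]
  calc ρ * ‖toEuclideanCLM (𝕜 := ℂ) (unnormalizedSzegoTransfer α z n)‖ ≤ ρ * (6 * M) := by
        gcongr
        exact norm_toEuclideanCLM_unnormalizedSzegoTransfer_le_max α (fun k => (hα k).le) hz n
    _ ≤ 8 * ρ * M := by nlinarith [mul_nonneg hρ hM]
end
end
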